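/- Let S be an inverse semigroup, ρ a left congruence on S with trace τ and kernel K. Then InK(ρ) = K ∩ N(τ), where N(τ) is the normaliser of τ. In particular, if a ∈ K and both conjugation maps by a and a⁻¹ preserve τ, then a ρ aa⁻¹. -/

import Mathlib

class InverseSemigroup (S : Type*) extends Semigroup S where
  inv : S → S
  mul_inv_mul : ∀ a : S, a * inv a * a = a
  inv_mul_inv : ∀ a : S, inv a * a * inv a = inv a
  inv_unique : ∀ a b : S, a * b * a = a → b * a * b = b → b = inv a

open InverseSemigroup

/-- `e` is an idempotent. -/
def IsIdem {S : Type*} [Mul S] (e : S) : Prop := e * e = e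

/-- `r` is a left congruence: an equivalence relation compatible with left multiplication. -/
def IsLeftCongruence {S : Type*} [Semigroup S] (r : S → S → Prop) : Prop :=
  Equivalence r ∧ ∀ a b c : S, r a b → r (c * a) (c * b)

/-- The inverse kernel of a relation: elements related to `a * a⁻¹`. -/
def InK {S : Type*} [InverseSemigroup S] (r : S → S → Prop) : Set S :=
  {a | r a (a * inv a)}

/-- The kernel: elements related to some idempotent. -/
def lker {S : Type*} [InverseSemigroup S] (r : S → S → Prop) : Set S :=
  {a | ∃ e, IsIdem e ∧ r a e}

/-- `τ` is a congruence on the semilattice of idempotents `E(S)`. -/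
def IsECong {S : Type*} [InverseSemigroup S] (τ : S → S → Prop) : Prop :=
  (∀ e f, τ e f → IsIdem e ∧ IsIdem f) ∧
  (∀ e, IsIdem e → τ e e) ∧
  (∀ e f, τ e f → τ f e) ∧
  (∀ e f g, τ e f → τ f g → τ e g) ∧
  (∀ e f g, IsIdem g → τ e f → τ (g * e) (g * f))

/-- The normaliser of a congruence on the idempotents. -/
def normaliser {S : Type*} [InverseSemigroup S] (τ : S → S → Prop) : Set S :=
  {a | ∀ e f, τ e f → τ (a * e * inv a) (a * f * inv a) ∧ τ (inv a * e * a) (inv a * f * a)}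

/-- `T` is a full inverse subsemigroup of `S`. -/
def IsFullInverseSub {S : Type*} [InverseSemigroup S] (T : Set S) : Prop :=
  (∀ e : S, IsIdem e → e ∈ T) ∧ (∀ a b, a ∈ T → b ∈ T → a * b ∈ T) ∧
  (∀ a, a ∈ T → inv a ∈ T)

/-! Idempotents of an inverse semigroup commute, so `a * e * inv a` is idempotent and
`a * e * inv a * a = a * e`. If `a ρ a a⁻¹`, left multiplication by `a e a⁻¹` and by `a⁻¹ e`
gives `a e a⁻¹ ρ a e` and `a⁻¹ e a ρ a⁻¹ e`, so both conjugations by `a` preserve the trace.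
Conversely, if `a ρ e` with `e` idempotent, then `e a ρ e e = e ρ a`, hence `a⁻¹ e a τ a⁻¹ a`;
conjugating by `a` gives `a a⁻¹ e τ a a⁻¹`, and `a ρ a a⁻¹ e` by left multiplication
with `a a⁻¹`. -/

namespace InverseSemigroup

variable {S : Type*} [InverseSemigroup S]

theorem inv_inv (a : S) : inv (inv a) = a :=
  (inv_unique (inv a) a (inv_mul_inv a) (mul_inv_mul a)).symm

theorem isIdem_mul_inv (a : S) : IsIdem (a * inv a) := by
  rw [IsIdem, ← mul_assoc, mul_inv_mul]

theorem isIdem_inv_mul (a : S) : IsIdem (inv a * a) := by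
  simpa only [inv_inv] using isIdem_mul_inv (inv a)

end InverseSemigroup

namespace IsIdem

variable {S : Type*} [InverseSemigroup S] {e f : S}

theorem mul_self_mul (he : IsIdem e) (x : S) : e * (e * x) = e * x := by
  rw [← mul_assoc, he]

theorem inv_eq (he : IsIdem e) : inv e = e :=
  (inv_unique e e (by rw [he, he]) (by rw [he, he])).symm

theorem mul (he : IsIdem e) (hf : IsIdem f) : IsIdem (e * f) := by
  set x := inv (e * f)
  have hfxe : f * x * e * (e * f) * (f * x * e) = f * x * e := by
    simpa only [mul_assoc, he.mul_self_mul, hf.mul_self_mul] using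
      congrArg (f * · * e) (inv_mul_inv (e * f))
  -- `f * x * e` is a second inverse of `e * f`, and it is visibly idempotent.
  have hx : f * x * e = x := by
    refine inv_unique (e * f) (f * x * e) ?_ hfxe
    simpa only [mul_assoc, he.mul_self_mul, hf.mul_self_mul] using mul_inv_mul (e * f)
  have hxx : IsIdem x := by
    rw [IsIdem, ← hx]
    simpa only [mul_assoc, he.mul_self_mul, hf.mul_self_mul] using hfxe
  rw [← inv_inv (e * f), hxx.inv_eq]
  exact hxx

theorem mul_comm (he : IsIdem e) (hf : IsIdem f) : e * f = f * e := by
  have hef := he.mul hf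
  have hfe := hf.mul he
  rw [IsIdem, mul_assoc] at hef hfe
  have h := inv_unique (e * f) (f * e)
    (by simpa only [mul_assoc, he.mul_self_mul, hf.mul_self_mul] using hef)
    (by simpa only [mul_assoc, he.mul_self_mul, hf.mul_self_mul] using hfe)
  rw [h, (he.mul hf).inv_eq]

theorem mul_mul_self (he : IsIdem e) (hf : IsIdem f) : f * e * f = f * e := by
  rw [mul_assoc, he.mul_comm hf, hf.mul_self_mul]

theorem mul_conj_mul (he : IsIdem e) (a : S) : a * e * inv a * a = a * e := by
  rw [mul_assoc, mul_assoc, he.mul_comm (isIdem_inv_mul a), ← mul_assoc, ← mul_assoc,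
    mul_inv_mul]

theorem conj (he : IsIdem e) (a : S) : IsIdem (a * e * inv a) := by
  rw [IsIdem, ← mul_assoc, ← mul_assoc, he.mul_conj_mul, mul_assoc a e e, he]

theorem inv_mul_conj_mul (he : IsIdem e) (a : S) : inv a * e * a * inv a = inv a * e := by
  simpa only [InverseSemigroup.inv_inv] using he.mul_conj_mul (inv a)

theorem conj_inv (he : IsIdem e) (a : S) : IsIdem (inv a * e * a) := by
  simpa only [InverseSemigroup.inv_inv] using he.conj (inv a)

end IsIdem

def trace {S : Type*} [InverseSemigroup S] (r : S → S → Prop) : S → S → Prop :=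
  fun e f => (IsIdem e ∧ IsIdem f) ∧ r e f

theorem InK_subset_lker {S : Type*} [InverseSemigroup S] (r : S → S → Prop) :
    InK r ⊆ lker r :=
  fun a ha => ⟨a * inv a, isIdem_mul_inv a, ha⟩

namespace IsLeftCongruence

variable {S : Type*} [InverseSemigroup S] {r : S → S → Prop} {a e : S}

theorem conj_rel_mul (hr : IsLeftCongruence r) (ha : a ∈ InK r) (he : IsIdem e) :
    r (a * e * inv a) (a * e) := by
  have h := hr.2 _ _ (a * e * inv a) ha
  rw [he.mul_conj_mul, ← mul_assoc, he.mul_conj_mul] at h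
  exact hr.1.symm h

theorem inv_conj_rel_inv_mul (hr : IsLeftCongruence r) (ha : a ∈ InK r) (he : IsIdem e) :
    r (inv a * e * a) (inv a * e) := by
  have h := hr.2 _ _ (inv a * e) ha
  rwa [← mul_assoc, he.inv_mul_conj_mul] at h

theorem InK_subset_normaliser (hr : IsLeftCongruence r) : InK r ⊆ normaliser (trace r) := by
  rintro a ha e f ⟨⟨he, hf⟩, hef⟩
  refine ⟨⟨⟨he.conj a, hf.conj a⟩, ?_⟩, ⟨⟨he.conj_inv a, hf.conj_inv a⟩, ?_⟩⟩
  · exact hr.1.trans (hr.conj_rel_mul ha he)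
      (hr.1.trans (hr.2 e f a hef) (hr.1.symm (hr.conj_rel_mul ha hf)))
  · exact hr.1.trans (hr.inv_conj_rel_inv_mul ha he)
      (hr.1.trans (hr.2 e f (inv a) hef) (hr.1.symm (hr.inv_conj_rel_inv_mul ha hf)))

theorem lker_inter_normaliser_subset_InK (hr : IsLeftCongruence r) :
    lker r ∩ normaliser (trace r) ⊆ InK r := by
  rintro a ⟨⟨e, he, hae⟩, hN⟩
  have hea : r (e * a) a := by
    have h := hr.2 a e e hae
    rw [he] at h
    exact hr.1.trans h (hr.1.symm hae)
  have hτ : trace r (inv a * e * a) (inv a * a) :=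
    ⟨⟨he.conj_inv a, isIdem_inv_mul a⟩, by simpa only [mul_assoc] using hr.2 _ _ (inv a) hea⟩
  have hconj := (hN _ _ hτ).1
  rw [← mul_assoc a (inv a) a, mul_inv_mul] at hconj
  rw [show a * (inv a * e * a) * inv a = a * inv a * e by
    simpa only [← mul_assoc] using he.mul_mul_self (isIdem_mul_inv a)] at hconj
  have hag : r a (a * inv a * e) := by
    simpa only [mul_inv_mul] using hr.2 _ _ (a * inv a) hae
  exact hr.1.trans hag hconj.2

end IsLeftCongruence

theorem stmt4 {S : Type*} [InverseSemigroup S] (r : S → S → Prop)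
    (hr : IsLeftCongruence r) :
    InK r = lker r ∩ normaliser (fun e f => (IsIdem e ∧ IsIdem f) ∧ r e f) :=
  (Set.subset_inter (InK_subset_lker r) hr.InK_subset_normaliser).antisymm
    hr.lker_inter_normaliser_subset_InK
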